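/- In the parallel composition with global actions SR and B, two dependent actions are never both enabled in any global state; equivalently, the dependency relation restricted to co-enabled actions is empty, so for any state s, any action enabled in s is independent of every other action enabled in s. -/

import Mathlib

/-! A barrier needs every process to be at `barrier`, so it is never co-enabled with a send/receive.
Since each process has a unique next local action, two distinct co-enabled `SR i j` and
`SR i' j'` involve four distinct processes; hence each leaves the other's enabling components
untouched, and their updates of the global state commute. -/

/-- Local actions of an MPI process: synchronous send to a destination,
receive from a specific source, or barrier. -/
inductive MAct (n : ℕ) where
  | send (dest : Fin n)
  | recv (src : Fin n)
  | barrier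
deriving DecidableEq

/-- Global actions of the parallel composition: `B` (barrier synchronizing all
processes) and `SR i j` (matched synchronous send from process `i` to
process `j`). -/
inductive GAct (n : ℕ) where
  | B
  | SR (i j : Fin n)
deriving DecidableEq

variable {n : ℕ} {L : Fin n → Type}

/-- A global action is enabled in the global state `σ` (an `n`-tuple of local
states): `B` iff every process's unique next local action is `barrier`;
`SR i j` iff `i ≠ j`, process `i`'s next action is a send to `j` and process
`j`'s next action is a receive from `i`. Here `next i` gives the unique next
local action of deterministic process `i` (`none` = terminated). -/
def GEnabled (next : ∀ i, L i → Option (MAct n)) (σ : ∀ i, L i) : GAct n → Prop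
  | .B => ∀ i, next i (σ i) = some .barrier
  | .SR i j => i ≠ j ∧ next i (σ i) = some (.send j) ∧ next j (σ j) = some (.recv i)

open scoped Classical in
/-- The global step function: `B` advances all components (via the local
advance functions `adv`), `SR i j` advances exactly components `i` and `j`. -/
noncomputable def gstep (next : ∀ i, L i → Option (MAct n)) (adv : ∀ i, L i → L i) :
    GAct n → (∀ i, L i) → Option (∀ i, L i)
  | .B, σ => if GEnabled next σ .B then some (fun k => adv k (σ k)) else none
  | .SR i j, σ =>
      if GEnabled next σ (.SR i j) then
        some (Function.update (Function.update σ i (adv i (σ i))) j (adv j (σ j)))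
      else none

section advancePair

variable {ι : Type*} [DecidableEq ι] {β : ι → Type*}

def advancePair (adv : ∀ k, β k → β k) (i j : ι) (σ : ∀ k, β k) : ∀ k, β k :=
  Function.update (Function.update σ i (adv i (σ i))) j (adv j (σ j))

theorem advancePair_apply_of_ne (adv : ∀ k, β k → β k) {i j k : ι} (hi : k ≠ i) (hj : k ≠ j)
    (σ : ∀ k, β k) : advancePair adv i j σ k = σ k := by
  simp only [advancePair, Function.update_of_ne hi, Function.update_of_ne hj]

theorem advancePair_comm (adv : ∀ k, β k → β k) {i j i' j' : ι} (hii' : i ≠ i') (hij' : i ≠ j')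
    (hji' : j ≠ i') (hjj' : j ≠ j') (σ : ∀ k, β k) :
    advancePair adv i' j' (advancePair adv i j σ) = advancePair adv i j (advancePair adv i' j' σ) := by
  conv_lhs => rw [advancePair, advancePair_apply_of_ne adv hii'.symm hji'.symm,
    advancePair_apply_of_ne adv hij'.symm hjj'.symm]
  conv_rhs => rw [advancePair, advancePair_apply_of_ne adv hii' hij',
    advancePair_apply_of_ne adv hji' hjj']
  unfold advancePair
  rw [Function.update_comm hji', Function.update_comm hii', Function.update_comm hjj',
    Function.update_comm hij']

end advancePair

theorem gstep_SR_of_enabled {next : ∀ i, L i → Option (MAct n)} (adv : ∀ i, L i → L i)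
    {σ : ∀ i, L i} {i j : Fin n} (h : GEnabled next σ (.SR i j)) :
    gstep next adv (.SR i j) σ = some (advancePair adv i j σ) :=
  if_pos h

theorem GEnabled.advancePair_SR {next : ∀ i, L i → Option (MAct n)} (adv : ∀ i, L i → L i)
    {σ : ∀ i, L i} {i j i' j' : Fin n} (h : GEnabled next σ (.SR i j))
    (hii' : i ≠ i') (hij' : i ≠ j') (hji' : j ≠ i') (hjj' : j ≠ j') :
    GEnabled next (advancePair adv i' j' σ) (.SR i j) := by
  obtain ⟨hij, hsend, hrecv⟩ := h
  exact ⟨hij, by rwa [advancePair_apply_of_ne adv hii' hij'],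
    by rwa [advancePair_apply_of_ne adv hji' hjj']⟩

theorem GEnabled.not_SR_of_B {next : ∀ i, L i → Option (MAct n)} {σ : ∀ i, L i}
    (hB : GEnabled next σ .B) (i j : Fin n) : ¬ GEnabled next σ (.SR i j) :=
  fun h ↦ by simpa using h.2.1.symm.trans (hB i)

theorem GEnabled.SR_disjoint {next : ∀ i, L i → Option (MAct n)} {σ : ∀ i, L i}
    {i j i' j' : Fin n} (h : GEnabled next σ (.SR i j)) (h' : GEnabled next σ (.SR i' j'))
    (hne : GAct.SR i j ≠ .SR i' j') : i ≠ i' ∧ i ≠ j' ∧ j ≠ i' ∧ j ≠ j' := by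
  obtain ⟨-, hsend, hrecv⟩ := h
  obtain ⟨-, hsend', hrecv'⟩ := h'
  refine ⟨?_, ?_, ?_, ?_⟩ <;> rintro rfl
  · have : j = j' := by simpa using hsend.symm.trans hsend'
    exact hne (this ▸ rfl)
  · simpa using hsend.symm.trans hrecv'
  · simpa using hrecv.symm.trans hsend'
  · have : i = i' := by simpa using hrecv.symm.trans hrecv'
    exact hne (this ▸ rfl)

/-- in the parallel composition with global actions `SR` and `B`,
any two distinct actions enabled in the same global state are independent
(each remains enabled after the other and they commute); equivalently, two
dependent actions are never both enabled in any global state. -/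
theorem stmt10 (next : ∀ i, L i → Option (MAct n)) (adv : ∀ i, L i → L i)
    (σ : ∀ i, L i) (g g' : GAct n)
    (hne : g ≠ g')
    (h1 : GEnabled next σ g)
    (h2 : GEnabled next σ g') :
    ∃ σ₁ σ₂,
      gstep next adv g σ = some σ₁ ∧
      gstep next adv g' σ = some σ₂ ∧
      GEnabled next σ₁ g' ∧
      GEnabled next σ₂ g ∧
      gstep next adv g' σ₁ = gstep next adv g σ₂ := by
  match g, g' with
  | .B, .B => exact (hne rfl).elim
  | .B, .SR i j => exact (h1.not_SR_of_B i j h2).elim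
  | .SR i j, .B => exact (h2.not_SR_of_B i j h1).elim
  | .SR i j, .SR i' j' =>
    obtain ⟨hii', hij', hji', hjj'⟩ := h1.SR_disjoint h2 hne
    have h2₁ := h2.advancePair_SR adv hii'.symm hji'.symm hij'.symm hjj'.symm
    have h1₂ := h1.advancePair_SR adv hii' hij' hji' hjj'
    refine ⟨_, _, gstep_SR_of_enabled adv h1, gstep_SR_of_enabled adv h2, h2₁, h1₂, ?_⟩
    rw [gstep_SR_of_enabled adv h2₁, gstep_SR_of_enabled adv h1₂,
      advancePair_comm adv hii' hij' hji' hjj']
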